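/- Let H = (V, E) be a hypergraph and let x̄ ∈ ℝ^E. Then x̄ belongs to the convex hull of the incidence vectors of the hyperforests of H if and only if 0 ≤ x̄(e) ≤ 1 for every e ∈ E and x̄(E[W]) ≤ |W| − 1 for every nonempty W ⊆ V. -/
import Mathlib


open Finset

variable {V α : Type*}

/-- `F[X]`: the subfamily of hyperedges of `F` contained in `X`. -/
def restrict [DecidableEq V] (edge : α → Finset V) (F : Finset α) (X : Finset V) : Finset α :=
  F.filter fun e => edge e ⊆ X

/-- `F` is a hyperforest of the hypergraph `(V, E)` (with hyperedges given by `edge`). -/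
def IsHyperforest [DecidableEq V] (edge : α → Finset V) (E F : Finset α) : Prop :=
  F ⊆ E ∧ ∀ X : Finset V, X.Nonempty → (restrict edge F X).card ≤ X.card - 1

/-- `F` is a hypertree: a hyperforest with `|V| - 1` hyperedges. -/
def IsHypertree [Fintype V] [DecidableEq V] (edge : α → Finset V) (E F : Finset α) : Prop :=
  IsHyperforest edge E F ∧ F.card = Fintype.card V - 1

/-- `Ps` is a family of pairwise disjoint nonempty sets whose union is `S`. -/
def IsPartitionOf [DecidableEq V] (Ps : Finset (Finset V)) (S : Finset V) : Prop :=
  (∀ P ∈ Ps, P.Nonempty) ∧ (∀ P ∈ Ps, ∀ Q ∈ Ps, P ≠ Q → Disjoint P Q) ∧ Ps.sup id = S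

/-- `Ps` is a partition of the vertex set `V` into nonempty parts. -/
def IsPartition [Fintype V] [DecidableEq V] (Ps : Finset (Finset V)) : Prop :=
  IsPartitionOf Ps Finset.univ

/-- `δ_F(Ps)`: hyperedges of `F` contained in the union of the members of `Ps`
and intersecting at least two members of `Ps`. -/
def delta [DecidableEq V] (edge : α → Finset V) (F : Finset α) (Ps : Finset (Finset V)) :
    Finset α :=
  F.filter fun e => edge e ⊆ Ps.sup id ∧
    2 ≤ (Ps.filter fun P => (edge e ∩ P).Nonempty).card

set_option linter.unusedSectionVars false

section Aux

variable [Fintype V] [DecidableEq V] [DecidableEq α]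

/-- Feasibility of a point for the hyperforest polytope. -/
def HFFeasible (edge : α → Finset V) (E : Finset α) (x : α → ℝ) : Prop :=
  (∀ e ∉ E, x e = 0) ∧ (∀ e ∈ E, 0 ≤ x e ∧ x e ≤ 1) ∧
    ∀ W : Finset V, W.Nonempty → (∑ e ∈ restrict edge E W, x e) ≤ (W.card : ℝ) - 1

open Classical in
/-- Edges with fractional value. -/
noncomputable def fracSet (E : Finset α) (x : α → ℝ) : Finset α :=
  E.filter fun e => 0 < x e ∧ x e < 1

open Classical in
/-- Nonempty vertex sets whose constraint is slack. -/
noncomputable def slackSet (edge : α → Finset V) (E : Finset α) (x : α → ℝ) :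
    Finset (Finset V) :=
  (Finset.univ : Finset V).powerset.filter fun W =>
    W.Nonempty ∧ (∑ e ∈ restrict edge E W, x e) < (W.card : ℝ) - 1

noncomputable def muHF (edge : α → Finset V) (E : Finset α) (x : α → ℝ) : ℕ :=
  (fracSet E x).card + (slackSet edge E x).card

variable (edge : α → Finset V) (E : Finset α)

lemma restrict_subset (F : Finset α) (X : Finset V) : restrict edge F X ⊆ F :=
  Finset.filter_subset _ _

lemma mem_restrict {F : Finset α} {X : Finset V} {e : α} :
    e ∈ restrict edge F X ↔ e ∈ F ∧ edge e ⊆ X := Finset.mem_filter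

lemma restrict_inter (F : Finset α) (X Y : Finset V) :
    restrict edge F (X ∩ Y) = restrict edge F X ∩ restrict edge F Y := by
  ext e
  simp [mem_restrict, Finset.subset_inter_iff]
  tauto

lemma restrict_union_subset (F : Finset α) (X Y : Finset V) :
    restrict edge F X ∪ restrict edge F Y ⊆ restrict edge F (X ∪ Y) := by
  intro e he
  rcases Finset.mem_union.1 he with h | h <;> rw [mem_restrict] at h ⊢ <;>
    exact ⟨h.1, h.2.trans (by simp [Finset.subset_union_left, Finset.subset_union_right])⟩

/-- Intersection of two intersecting tight sets is tight. -/
lemma tight_inter (x : α → ℝ) (hx0 : ∀ e ∈ E, 0 ≤ x e)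
    (hcon : ∀ W : Finset V, W.Nonempty → (∑ e ∈ restrict edge E W, x e) ≤ (W.card : ℝ) - 1)
    {W W' : Finset V}
    (htW : (∑ e ∈ restrict edge E W, x e) = (W.card : ℝ) - 1)
    (htW' : (∑ e ∈ restrict edge E W', x e) = (W'.card : ℝ) - 1)
    (hint : (W ∩ W').Nonempty) :
    (∑ e ∈ restrict edge E (W ∩ W'), x e) = ((W ∩ W').card : ℝ) - 1 := by
  have h1 : (∑ e ∈ restrict edge E W ∪ restrict edge E W', x e) +
      ∑ e ∈ restrict edge E W ∩ restrict edge E W', x e =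
      (∑ e ∈ restrict edge E W, x e) + ∑ e ∈ restrict edge E W', x e :=
    Finset.sum_union_inter
  rw [← restrict_inter] at h1
  have h2 : (∑ e ∈ restrict edge E W ∪ restrict edge E W', x e) ≤
      ∑ e ∈ restrict edge E (W ∪ W'), x e := by
    refine Finset.sum_le_sum_of_subset_of_nonneg (restrict_union_subset edge E W W') ?_
    intro e he _
    exact hx0 e (restrict_subset edge E _ he)
  have hWne : W.Nonempty := by
    rcases hint with ⟨v, hv⟩; exact ⟨v, (Finset.mem_inter.1 hv).1⟩
  have h3 : (∑ e ∈ restrict edge E (W ∪ W'), x e) ≤ ((W ∪ W').card : ℝ) - 1 :=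
    hcon _ (hWne.mono Finset.subset_union_left)
  have h4 : (∑ e ∈ restrict edge E (W ∩ W'), x e) ≤ ((W ∩ W').card : ℝ) - 1 :=
    hcon _ hint
  have hcard : ((W ∪ W').card : ℝ) + ((W ∩ W').card : ℝ) = (W.card : ℝ) + W'.card := by
    exact_mod_cast congrArg (Nat.cast : ℕ → ℝ) (Finset.card_union_add_card_inter W W')
  linarith

end Aux

section Step

variable [Fintype V] [DecidableEq V] [DecidableEq α] (edge : α → Finset V) (E : Finset α)

lemma sum_restrict_add (x d : α → ℝ) (t : ℝ) (W : Finset V) :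
    (∑ e ∈ restrict edge E W, (x e + t * d e)) =
      (∑ e ∈ restrict edge E W, x e) + t * ∑ e ∈ restrict edge E W, d e := by
  rw [Finset.sum_add_distrib, Finset.mul_sum]

/-- Moving from a feasible point along a suitable direction until a constraint gets tight. -/
lemma step_lemma (x d : α → ℝ) (hx : HFFeasible edge E x)
    (hd : ∀ e, d e ≠ 0 → e ∈ E ∧ 0 < x e ∧ x e < 1)
    (hdval : ∀ e, d e = 1 ∨ d e = 0 ∨ d e = -1)
    (hne : ∃ e, d e ≠ 0)
    (hsumval : ∀ W : Finset V, (∑ e ∈ restrict edge E W, d e) = 1 ∨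
      (∑ e ∈ restrict edge E W, d e) = 0 ∨ (∑ e ∈ restrict edge E W, d e) = -1)
    (htight : ∀ W : Finset V, W.Nonempty →
      (∑ e ∈ restrict edge E W, x e) = (W.card : ℝ) - 1 →
      (∑ e ∈ restrict edge E W, d e) = 0) :
    ∃ t : ℝ, 0 < t ∧ HFFeasible edge E (fun e => x e + t * d e) ∧
      muHF edge E (fun e => x e + t * d e) < muHF edge E x := by
  classical
  obtain ⟨hx1, hx2, hx3⟩ := hx
  set T : Finset ℝ :=
    ((E.filter fun e => d e = 1).image fun e => 1 - x e) ∪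
    ((E.filter fun e => d e = -1).image fun e => x e) ∪
    (((slackSet edge E x).filter fun W => (∑ e ∈ restrict edge E W, d e) = 1).image
      fun W => (W.card : ℝ) - 1 - ∑ e ∈ restrict edge E W, x e) with hT
  have hTne : T.Nonempty := by
    obtain ⟨e, he⟩ := hne
    obtain ⟨heE, -, -⟩ := hd e he
    rcases hdval e with h | h | h
    · exact ⟨1 - x e, by
        apply Finset.mem_union_left; apply Finset.mem_union_left
        exact Finset.mem_image.2 ⟨e, Finset.mem_filter.2 ⟨heE, h⟩, rfl⟩⟩
    · exact absurd h he
    · exact ⟨x e, by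
        apply Finset.mem_union_left; apply Finset.mem_union_right
        exact Finset.mem_image.2 ⟨e, Finset.mem_filter.2 ⟨heE, h⟩, rfl⟩⟩
  set t := T.min' hTne with ht
  have htpos : 0 < t := by
    rw [ht]
    apply (Finset.lt_min'_iff T hTne).2
    intro b hb
    rcases Finset.mem_union.1 hb with hb | hb
    · rcases Finset.mem_union.1 hb with hb | hb
      · obtain ⟨e, he, rfl⟩ := Finset.mem_image.1 hb
        have := (hd e (by rw [(Finset.mem_filter.1 he).2]; norm_num)).2.2
        linarith
      · obtain ⟨e, he, rfl⟩ := Finset.mem_image.1 hb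
        exact (hd e (by rw [(Finset.mem_filter.1 he).2]; norm_num)).2.1
    · obtain ⟨W, hW, rfl⟩ := Finset.mem_image.1 hb
      have := (Finset.mem_filter.1 ((Finset.mem_filter.1 hW).1)).2.2
      linarith
  have htle : ∀ b ∈ T, t ≤ b := fun b hb => Finset.min'_le T b hb
  have htle1 : ∀ e ∈ E, d e = 1 → t ≤ 1 - x e := by
    intro e he h1
    exact htle _ (Finset.mem_union_left _ (Finset.mem_union_left _
      (Finset.mem_image.2 ⟨e, Finset.mem_filter.2 ⟨he, h1⟩, rfl⟩)))
  have htle2 : ∀ e ∈ E, d e = -1 → t ≤ x e := by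
    intro e he h1
    exact htle _ (Finset.mem_union_left _ (Finset.mem_union_right _
      (Finset.mem_image.2 ⟨e, Finset.mem_filter.2 ⟨he, h1⟩, rfl⟩)))
  have htle3 : ∀ W ∈ slackSet edge E x, (∑ e ∈ restrict edge E W, d e) = 1 →
      t ≤ (W.card : ℝ) - 1 - ∑ e ∈ restrict edge E W, x e := by
    intro W hW h1
    exact htle _ (Finset.mem_union_right _
      (Finset.mem_image.2 ⟨W, Finset.mem_filter.2 ⟨hW, h1⟩, rfl⟩))
  have hslackmem : ∀ W : Finset V, W.Nonempty →
      (∑ e ∈ restrict edge E W, x e) < (W.card : ℝ) - 1 → W ∈ slackSet edge E x := by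
    intro W h1 h2
    exact Finset.mem_filter.2 ⟨Finset.mem_powerset.2 (Finset.subset_univ W), h1, h2⟩
  refine ⟨t, htpos, ⟨?_, ?_, ?_⟩, ?_⟩
  · -- support
    intro e heE
    have hd0 : d e = 0 := by
      by_contra h
      exact heE (hd e h).1
    show x e + t * d e = 0
    rw [hx1 e heE, hd0]; ring
  · -- bounds
    intro e heE
    show 0 ≤ x e + t * d e ∧ x e + t * d e ≤ 1
    rcases hdval e with h | h | h
    · have hf := hd e (by rw [h]; norm_num)
      have := htle1 e heE h
      rw [h]
      constructor <;> · simp only [mul_one]; linarith [hf.2.1]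
    · rw [h]; simpa using hx2 e heE
    · have hf := hd e (by rw [h]; norm_num)
      have := htle2 e heE h
      rw [h]
      constructor <;> · simp only [mul_neg_one]; linarith [hf.2.2]
  · -- W constraints
    intro W hWne
    rw [sum_restrict_add]
    rcases hsumval W with h | h | h
    · have hslack : (∑ e ∈ restrict edge E W, x e) < (W.card : ℝ) - 1 := by
        rcases lt_or_eq_of_le (hx3 W hWne) with h' | h'
        · exact h'
        · exact absurd (htight W hWne h') (by rw [h]; norm_num)
      have := htle3 W (hslackmem W hWne hslack) h
      rw [h]; linarith
    · rw [h]; simpa using hx3 W hWne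
    · rw [h]; have := hx3 W hWne; linarith
  · -- measure decreases
    have hfr : fracSet E (fun e => x e + t * d e) ⊆ fracSet E x := by
      intro e he
      rw [fracSet, Finset.mem_filter] at he ⊢
      refine ⟨he.1, ?_⟩
      by_cases h : d e = 0
      · rw [h] at he; simpa using he.2
      · exact (hd e h).2
    have hsl : slackSet edge E (fun e => x e + t * d e) ⊆ slackSet edge E x := by
      intro W hW
      rw [slackSet, Finset.mem_filter] at hW ⊢
      obtain ⟨hWu, hWne, hWs⟩ := hW
      refine ⟨hWu, hWne, ?_⟩
      rcases lt_or_eq_of_le (hx3 W hWne) with h' | h'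
      · exact h'
      · exfalso
        rw [sum_restrict_add, htight W hWne h', mul_zero, add_zero, h'] at hWs
        exact lt_irrefl _ hWs
    have hmem := Finset.min'_mem T hTne
    rw [← ht] at hmem
    have key : (fracSet E (fun e => x e + t * d e)).card < (fracSet E x).card ∨
        (slackSet edge E (fun e => x e + t * d e)).card < (slackSet edge E x).card := by
      rcases Finset.mem_union.1 hmem with hb | hb
      · left
        rcases Finset.mem_union.1 hb with hb | hb
        · obtain ⟨e, he, heq⟩ := Finset.mem_image.1 hb
          obtain ⟨heE, hde⟩ := Finset.mem_filter.1 he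
          apply Finset.card_lt_card
          refine ⟨hfr, fun hss => ?_⟩
          have h1 : e ∈ fracSet E x :=
            Finset.mem_filter.2 ⟨heE, (hd e (by rw [hde]; norm_num)).2⟩
          have h2 := hss h1
          rw [fracSet, Finset.mem_filter] at h2
          rw [hde, mul_one, ← heq] at h2
          linarith [h2.2.2]
        · obtain ⟨e, he, heq⟩ := Finset.mem_image.1 hb
          obtain ⟨heE, hde⟩ := Finset.mem_filter.1 he
          apply Finset.card_lt_card
          refine ⟨hfr, fun hss => ?_⟩
          have h1 : e ∈ fracSet E x :=
            Finset.mem_filter.2 ⟨heE, (hd e (by rw [hde]; norm_num)).2⟩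
          have h2 := hss h1
          rw [fracSet, Finset.mem_filter] at h2
          rw [hde, mul_neg_one, ← heq] at h2
          linarith [h2.2.1]
      · right
        obtain ⟨W, hW, heq⟩ := Finset.mem_image.1 hb
        obtain ⟨hWsl, hdW⟩ := Finset.mem_filter.1 hW
        apply Finset.card_lt_card
        refine ⟨hsl, fun hss => ?_⟩
        have h2 := hss hWsl
        rw [slackSet, Finset.mem_filter] at h2
        have := h2.2.2
        rw [sum_restrict_add, hdW, mul_one, ← heq] at this
        linarith
    rcases key with h | h
    · exact Nat.add_lt_add_of_lt_of_le h (Finset.card_le_card hsl)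
    · exact Nat.add_lt_add_of_le_of_lt (Finset.card_le_card hfr) h

end Step

section Direction

variable [Fintype V] [DecidableEq V] [DecidableEq α] (edge : α → Finset V) (E : Finset α)

lemma exists_direction (x : α → ℝ) (hx : HFFeasible edge E x)
    (hE : ∀ e ∈ E, 2 ≤ (edge e).card) (hfr : (fracSet E x).Nonempty) :
    ∃ d : α → ℝ, (∀ e, d e ≠ 0 → e ∈ E ∧ 0 < x e ∧ x e < 1) ∧
      (∀ e, d e = 1 ∨ d e = 0 ∨ d e = -1) ∧ (∃ e, d e ≠ 0) ∧
      (∀ W : Finset V, (∑ e ∈ restrict edge E W, d e) = 1 ∨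
        (∑ e ∈ restrict edge E W, d e) = 0 ∨ (∑ e ∈ restrict edge E W, d e) = -1) ∧
      (∀ W : Finset V, W.Nonempty →
        (∑ e ∈ restrict edge E W, x e) = (W.card : ℝ) - 1 →
        (∑ e ∈ restrict edge E W, d e) = 0) := by
  classical
  obtain ⟨hx1, hx2, hx3⟩ := hx
  have hfrac : ∀ e ∈ fracSet E x, e ∈ E ∧ 0 < x e ∧ x e < 1 := by
    intro e he
    have := Finset.mem_filter.1 he
    exact ⟨this.1, this.2⟩
  set TA : Finset (Finset V) := (Finset.univ : Finset V).powerset.filter fun W =>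
    W.Nonempty ∧ (∑ e ∈ restrict edge E W, x e) = (W.card : ℝ) - 1 ∧
      ∃ e ∈ fracSet E x, edge e ⊆ W with hTAdef
  by_cases hTA : TA.Nonempty
  · -- there is a tight set containing a fractional edge
    obtain ⟨W₀, hW₀TA, hW₀min⟩ := Finset.exists_min_image TA Finset.card hTA
    obtain ⟨-, hW₀ne, hW₀t, e₀, he₀fr, he₀sub⟩ := Finset.mem_filter.1 hW₀TA
    obtain ⟨he₀E, he₀frac⟩ := hfrac e₀ he₀fr
    have hkey : ∀ W : Finset V, W.Nonempty →
        (∑ e ∈ restrict edge E W, x e) = (W.card : ℝ) - 1 →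
        (∃ e ∈ fracSet E x, edge e ⊆ W ∧ edge e ⊆ W₀) → W₀ ⊆ W := by
      rintro W hWne htW ⟨e, hefr, heW, heW0⟩
      have heE := (hfrac e hefr).1
      have hedge_ne : (edge e).Nonempty :=
        Finset.card_pos.1 (lt_of_lt_of_le (by norm_num) (hE e heE))
      have hint : (W ∩ W₀).Nonempty :=
        hedge_ne.mono (Finset.subset_inter heW heW0)
      have htint := tight_inter edge E x (fun e he => (hx2 e he).1) hx3 htW hW₀t hint
      have hmemTA : W ∩ W₀ ∈ TA := Finset.mem_filter.2
        ⟨Finset.mem_powerset.2 (Finset.subset_univ _), hint, htint,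
          e, hefr, Finset.subset_inter heW heW0⟩
      have hcard := hW₀min _ hmemTA
      have heqint : W ∩ W₀ = W₀ :=
        Finset.eq_of_subset_of_card_le Finset.inter_subset_right hcard
      rw [← heqint]
      exact Finset.inter_subset_left
    have he₀r : e₀ ∈ restrict edge E W₀ := (mem_restrict edge).2 ⟨he₀E, he₀sub⟩
    -- find a second fractional edge inside W₀
    obtain ⟨e₁, he₁r, he₁ne, he₁fr⟩ :
        ∃ e₁ ∈ restrict edge E W₀, e₁ ≠ e₀ ∧ e₁ ∈ fracSet E x := by
      by_contra hcon
      push_neg at hcon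
      set s := restrict edge E W₀ with hs
      have hsum : ∑ e ∈ s, x e = x e₀ + ∑ e ∈ s.erase e₀, x e :=
        (Finset.add_sum_erase s x he₀r).symm
      have hrest : ∑ e ∈ s.erase e₀, x e =
          (((s.erase e₀).filter fun e => x e = 1).card : ℝ) := by
        rw [← Finset.sum_boole]
        apply Finset.sum_congr rfl
        intro e he
        have hes : e ∈ s := Finset.mem_of_mem_erase he
        have heE : e ∈ E := restrict_subset edge E _ hes
        have hene : e ≠ e₀ := (Finset.mem_erase.1 he).1
        have hnotfr : e ∉ fracSet E x := hcon e hes hene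
        by_cases h1 : x e = 1
        · simp [h1]
        · have h0 : x e = 0 := by
            rcases lt_or_eq_of_le (hx2 e heE).1 with hlt | heq
            · exfalso
              exact hnotfr (Finset.mem_filter.2
                ⟨heE, hlt, lt_of_le_of_ne (hx2 e heE).2 h1⟩)
            · exact heq.symm
          simp [h0, h1]
      set k := ((s.erase e₀).filter fun e => x e = 1).card with hk
      have hxe₀ : x e₀ = (W₀.card : ℝ) - 1 - k := by
        rw [hW₀t] at hsum  -- hW₀t : ∑ e ∈ s, x e = card - 1  (note s is restrict edge E W₀)
        linarith [hrest]
      have hk1 : (k : ℝ) + 1 < W₀.card := by linarith [he₀frac.2, he₀frac.1]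
      have hk2 : (W₀.card : ℝ) < (k : ℝ) + 2 := by linarith [he₀frac.2, he₀frac.1]
      have hn1 : k + 1 < W₀.card := by exact_mod_cast hk1
      have hn2 : W₀.card < k + 2 := by exact_mod_cast hk2
      omega
    obtain ⟨he₁E, he₁frac⟩ := hfrac e₁ he₁fr
    have he₁sub : edge e₁ ⊆ W₀ := ((mem_restrict edge).1 he₁r).2
    have hsplit : ∀ W : Finset V,
        (∑ e ∈ restrict edge E W, (if e = e₀ then (1:ℝ) else if e = e₁ then -1 else 0)) =
        (if e₀ ∈ restrict edge E W then (1:ℝ) else 0) +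
          (if e₁ ∈ restrict edge E W then (-1:ℝ) else 0) := by
      intro W
      have hsp : ∀ e, (if e = e₀ then (1:ℝ) else if e = e₁ then -1 else 0) =
          (if e = e₀ then (1:ℝ) else 0) + (if e = e₁ then (-1:ℝ) else 0) := by
        intro e
        by_cases h0 : e = e₀
        · have hne01 : ¬ e₀ = e₁ := fun h => he₁ne h.symm
          rw [h0]
          simp [hne01]
        · by_cases h1 : e = e₁ <;> simp [h0, h1, he₁ne]
      rw [Finset.sum_congr rfl fun e _ => hsp e, Finset.sum_add_distrib,
        Finset.sum_ite_eq' (restrict edge E W) e₀ (fun _ => (1:ℝ)),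
        Finset.sum_ite_eq' (restrict edge E W) e₁ (fun _ => (-1:ℝ))]
    refine ⟨fun e => if e = e₀ then 1 else if e = e₁ then -1 else 0, ?_, ?_, ?_, ?_, ?_⟩
    · intro e he
      by_cases h0 : e = e₀
      · subst h0; exact ⟨he₀E, he₀frac⟩
      · by_cases h1 : e = e₁
        · subst h1; exact ⟨he₁E, he₁frac⟩
        · simp [h0, h1] at he
    · intro e; by_cases h0 : e = e₀ <;> by_cases h1 : e = e₁ <;> simp [h0, h1, he₁ne]
    · exact ⟨e₀, by simp⟩
    · intro W
      rw [hsplit W]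
      by_cases h0 : e₀ ∈ restrict edge E W <;> by_cases h1 : e₁ ∈ restrict edge E W <;>
        simp [h0, h1]
    · intro W hWne htW
      rw [hsplit W]
      have hiff : e₀ ∈ restrict edge E W ↔ e₁ ∈ restrict edge E W := by
        constructor
        · intro h
          have hW₀W : W₀ ⊆ W := hkey W hWne htW
            ⟨e₀, he₀fr, ((mem_restrict edge).1 h).2, he₀sub⟩
          exact (mem_restrict edge).2 ⟨he₁E, he₁sub.trans hW₀W⟩
        · intro h
          have hW₀W : W₀ ⊆ W := hkey W hWne htW
            ⟨e₁, he₁fr, ((mem_restrict edge).1 h).2, he₁sub⟩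
          exact (mem_restrict edge).2 ⟨he₀E, he₀sub.trans hW₀W⟩
      by_cases h0 : e₀ ∈ restrict edge E W
      · simp [h0, hiff.1 h0]
      · have h1 : e₁ ∉ restrict edge E W := fun h => h0 (hiff.2 h)
        simp [h0, h1]
  · -- no tight set contains a fractional edge
    obtain ⟨e₀, he₀fr⟩ := hfr
    obtain ⟨he₀E, he₀frac⟩ := hfrac e₀ he₀fr
    have hsplit : ∀ W : Finset V,
        (∑ e ∈ restrict edge E W, (if e = e₀ then (1:ℝ) else 0)) =
        (if e₀ ∈ restrict edge E W then (1:ℝ) else 0) :=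
      fun W => Finset.sum_ite_eq' (restrict edge E W) e₀ (fun _ => (1:ℝ))
    refine ⟨fun e => if e = e₀ then 1 else 0, ?_, ?_, ?_, ?_, ?_⟩
    · intro e he
      by_cases h0 : e = e₀
      · subst h0; exact ⟨he₀E, he₀frac⟩
      · simp [h0] at he
    · intro e; by_cases h0 : e = e₀ <;> simp [h0]
    · exact ⟨e₀, by simp⟩
    · intro W
      rw [hsplit W]
      by_cases h0 : e₀ ∈ restrict edge E W <;> simp [h0]
    · intro W hWne htW
      rw [hsplit W]
      have hnr : e₀ ∉ restrict edge E W := by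
        intro h
        exact hTA ⟨W, Finset.mem_filter.2 ⟨Finset.mem_powerset.2 (Finset.subset_univ _),
          hWne, htW, e₀, he₀fr, ((mem_restrict edge).1 h).2⟩⟩
      simp [hnr]

end Direction

section Main

variable [Fintype V] [DecidableEq V] [DecidableEq α] (edge : α → Finset V) (E : Finset α)

lemma feasible_mem_hull (hE : ∀ e ∈ E, 2 ≤ (edge e).card) :
    ∀ n (x : α → ℝ), HFFeasible edge E x → muHF edge E x = n →
      x ∈ convexHull ℝ {y : α → ℝ | ∃ F : Finset α, IsHyperforest edge E F ∧
        y = fun e => if e ∈ F then (1 : ℝ) else 0} := by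
  intro n
  induction n using Nat.strong_induction_on with
  | _ n ih =>
    intro x hx hmu
    classical
    by_cases hfr : (fracSet E x).Nonempty
    · -- inductive step: move along a direction in both ways
      obtain ⟨d, hd, hdval, hne, hsumval, htight⟩ := exists_direction edge E x hx hE hfr
      obtain ⟨tp, htp, hyfeas, hymu⟩ := step_lemma edge E x d hx hd hdval hne hsumval htight
      obtain ⟨tm, htm, hzfeas, hzmu⟩ := step_lemma edge E x (fun e => -(d e)) hx
        (fun e he => hd e (by simpa using he))
        (fun e => by rcases hdval e with h | h | h <;> simp [h])
        (by obtain ⟨e, he⟩ := hne; exact ⟨e, by simpa using he⟩)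
        (fun W => by
          have hneg : (∑ e ∈ restrict edge E W, (fun e => -(d e)) e) =
              -∑ e ∈ restrict edge E W, d e := by simp
          rw [hneg]
          rcases hsumval W with h | h | h <;> rw [h] <;> norm_num)
        (fun W h1 h2 => by
          have hneg : (∑ e ∈ restrict edge E W, (fun e => -(d e)) e) =
              -∑ e ∈ restrict edge E W, d e := by simp
          rw [hneg, htight W h1 h2, neg_zero])
      set y := fun e => x e + tp * d e with hy
      set z := fun e => x e + tm * -(d e) with hz
      have hyhull := ih _ (hmu ▸ hymu) y hyfeas rfl
      have hzhull := ih _ (hmu ▸ hzmu) z hzfeas rfl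
      have hts : 0 < tp + tm := by linarith
      have ha : 0 ≤ tm / (tp + tm) := by positivity
      have hb : 0 ≤ tp / (tp + tm) := by positivity
      have hab : tm / (tp + tm) + tp / (tp + tm) = 1 := by field_simp; ring
      have hxeq : x = (tm / (tp + tm)) • y + (tp / (tp + tm)) • z := by
        funext e
        simp only [hy, hz, Pi.add_apply, Pi.smul_apply, smul_eq_mul]
        field_simp
        ring
      rw [hxeq]
      exact (convex_convexHull ℝ _) hyhull hzhull ha hb hab
    · -- base case: integral point, it is an incidence vector of a hyperforest
      obtain ⟨hx1, hx2, hx3⟩ := hx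
      rw [Finset.not_nonempty_iff_eq_empty] at hfr
      have hint : ∀ e ∈ E, x e = 0 ∨ x e = 1 := by
        intro e he
        by_cases h1 : x e = 1
        · exact Or.inr h1
        · left
          rcases lt_or_eq_of_le (hx2 e he).1 with hlt | heq
          · exfalso
            have : e ∈ fracSet E x := Finset.mem_filter.2
              ⟨he, hlt, lt_of_le_of_ne (hx2 e he).2 h1⟩
            rw [hfr] at this
            exact absurd this (Finset.notMem_empty e)
          · exact heq.symm
      set F : Finset α := E.filter fun e => x e = 1 with hF
      have hFsub : F ⊆ E := Finset.filter_subset _ _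
      have hkey : ∀ X : Finset V, restrict edge F X =
          (restrict edge E X).filter fun e => x e = 1 := by
        intro X
        ext e
        simp only [mem_restrict, hF, Finset.mem_filter]
        tauto
      have hkeysum : ∀ X : Finset V,
          (∑ e ∈ restrict edge E X, x e) = ((restrict edge F X).card : ℝ) := by
        intro X
        rw [hkey, ← Finset.sum_boole]
        apply Finset.sum_congr rfl
        intro e he
        have heE : e ∈ E := restrict_subset edge E _ he
        rcases hint e heE with h | h <;> simp [h]
      apply subset_convexHull
      refine ⟨F, ⟨hFsub, ?_⟩, ?_⟩
      · intro X hXne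
        have h1 := hx3 X hXne
        rw [hkeysum X] at h1
        have hX1 : 1 ≤ X.card := Finset.card_pos.2 hXne
        have h2 : ((restrict edge F X).card : ℝ) + 1 ≤ (X.card : ℝ) := by linarith
        have h3 : (restrict edge F X).card + 1 ≤ X.card := by exact_mod_cast h2
        omega
      · funext e
        by_cases heF : e ∈ F
        · have := (Finset.mem_filter.1 heF).2
          simp [heF, this]
        · by_cases heE : e ∈ E
          · have : x e = 0 := by
              rcases hint e heE with h | h
              · exact h
              · exact absurd (Finset.mem_filter.2 ⟨heE, h⟩) heF
            simp [heF, this]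
          · simp [heF, hx1 e heE]

end Main

/-- `x̄ ∈ ℝ^E` belongs to the convex hull of incidence vectors of
hyperforests iff `0 ≤ x̄ ≤ 1` and `x̄(E[W]) ≤ |W| - 1` for every nonempty `W ⊆ V`. -/
theorem hyperforest_polytope_characterization [Fintype V] [DecidableEq V] [DecidableEq α]
    (edge : α → Finset V) (E : Finset α)
    (hV : 1 ≤ Fintype.card V) (hE : ∀ e ∈ E, 2 ≤ (edge e).card)
    (x : α → ℝ) (hsupp : ∀ e ∉ E, x e = 0) :
    x ∈ convexHull ℝ {y : α → ℝ | ∃ F : Finset α, IsHyperforest edge E F ∧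
        y = fun e => if e ∈ F then (1 : ℝ) else 0} ↔
      ((∀ e ∈ E, 0 ≤ x e ∧ x e ≤ 1) ∧
        ∀ W : Finset V, W.Nonempty →
          (∑ e ∈ restrict edge E W, x e) ≤ (W.card : ℝ) - 1) := by
  constructor
  · intro hx
    set C : Set (α → ℝ) := {y | (∀ e ∈ E, 0 ≤ y e ∧ y e ≤ 1) ∧
      ∀ W : Finset V, W.Nonempty →
        (∑ e ∈ restrict edge E W, y e) ≤ (W.card : ℝ) - 1} with hC
    have hgen : {y : α → ℝ | ∃ F : Finset α, IsHyperforest edge E F ∧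
        y = fun e => if e ∈ F then (1 : ℝ) else 0} ⊆ C := by
      rintro y ⟨F, ⟨hFsub, hFforest⟩, rfl⟩
      constructor
      · intro e _
        by_cases h : e ∈ F <;> simp [h]
      · intro W hWne
        classical
        have hkey : restrict edge F W = (restrict edge E W).filter fun e => e ∈ F := by
          ext e
          simp only [mem_restrict, Finset.mem_filter]
          constructor
          · intro ⟨h1, h2⟩; exact ⟨⟨hFsub h1, h2⟩, h1⟩
          · intro ⟨⟨_, h2⟩, h3⟩; exact ⟨h3, h2⟩
        have hsum : (∑ e ∈ restrict edge E W, if e ∈ F then (1:ℝ) else 0) =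
            ((restrict edge F W).card : ℝ) := by
          rw [hkey, ← Finset.sum_boole]
        rw [hsum]
        have h1 := hFforest W hWne
        have hW1 : 1 ≤ W.card := Finset.card_pos.2 hWne
        have h2 : (restrict edge F W).card + 1 ≤ W.card := by omega
        have h3 : ((restrict edge F W).card : ℝ) + 1 ≤ (W.card : ℝ) := by exact_mod_cast h2
        linarith
    have hconv : Convex ℝ C := by
      intro y hy z hz a b ha hb hab
      constructor
      · intro e he
        have h1 := hy.1 e he
        have h2 := hz.1 e he
        have e1 : (a • y + b • z) e = a * y e + b * z e := by
          simp [Pi.add_apply, Pi.smul_apply, smul_eq_mul]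
        rw [e1]
        constructor
        · exact add_nonneg (mul_nonneg ha h1.1) (mul_nonneg hb h2.1)
        · nlinarith [h1.2, h2.2]
      · intro W hWne
        have e1 : (∑ e ∈ restrict edge E W, (a • y + b • z) e) =
            a * (∑ e ∈ restrict edge E W, y e) + b * (∑ e ∈ restrict edge E W, z e) := by
          rw [Finset.mul_sum, Finset.mul_sum, ← Finset.sum_add_distrib]
          apply Finset.sum_congr rfl
          intro e _
          simp [Pi.add_apply, Pi.smul_apply, smul_eq_mul]
        rw [e1]
        have h1 := mul_le_mul_of_nonneg_left (hy.2 W hWne) ha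
        have h2 := mul_le_mul_of_nonneg_left (hz.2 W hWne) hb
        nlinarith
    exact convexHull_min hgen hconv hx
  · intro ⟨h1, h2⟩
    exact feasible_mem_hull edge E hE (muHF edge E x) x ⟨hsupp, h1, h2⟩ rfl
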